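/- arXiv:1707.03708 — 2 statements merged into one kernel-verified Lean document; each statement's English description precedes it below -/
import Mathlib

section
/- Let δ_d, δ_l ∈ (0,1] and let V_l, V_d be real numbers with V_d < 0 < V_l. For q ∈ (0,1) define σ*(q) = δ_l·(1−q)·V_l / (δ_d·q·(−V_d)), the unique persistence probability making a receiver observing suspicious evidence indifferent between trusting and locking down. Then the total botnet activity q·σ*(q) = δ_l·(1−q)·V_l / (δ_d·(−V_d)) is strictly decreasing in q and satisfies q·σ*(q) < δ_l·V_l / (δ_d·(−V_d)) for all q ∈ (0,1). In particular, the total activity of botnet scanners (the product of the prior probability of malicious senders and their equilibrium persistence probability) is bounded above by a constant independent of the prior q. -/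
/-- Bounded botnet activity: with the equilibrium persistence probability
`σ*(q) = δ_l (1−q) V_l / (δ_d q (−V_d))`, the total activity
`q·σ*(q) = δ_l (1−q) V_l / (δ_d (−V_d))` is strictly decreasing in the prior
`q ∈ (0,1)` and bounded above by `δ_l V_l / (δ_d (−V_d))`, a constant
independent of `q`. -/
theorem total_botnet_activity_bounded
    (δd δl Vl Vd : ℝ)
    (hδd0 : 0 < δd) (hδd1 : δd ≤ 1)
    (hδl0 : 0 < δl) (hδl1 : δl ≤ 1)
    (hVd : Vd < 0) (hVl : 0 < Vl)
    (σstar : ℝ → ℝ)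
    (hσstar : ∀ q, σstar q = δl * (1 - q) * Vl / (δd * q * (-Vd))) :
    (∀ q, 0 < q → q < 1 →
        q * σstar q = δl * (1 - q) * Vl / (δd * (-Vd))) ∧
    StrictAntiOn (fun q => q * σstar q) (Set.Ioo (0 : ℝ) 1) ∧
    (∀ q, 0 < q → q < 1 → q * σstar q < δl * Vl / (δd * (-Vd))) := by
  have hden : 0 < δd * (-Vd) := mul_pos hδd0 (neg_pos.mpr hVd)
  have key : ∀ q : ℝ, 0 < q → q < 1 →
      q * σstar q = δl * (1 - q) * Vl / (δd * (-Vd)) := by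
    intro q hq0 hq1
    rw [hσstar q]
    rw [mul_comm δd q, mul_assoc q δd, mul_div_assoc',
      mul_div_mul_left _ _ hq0.ne']
  refine ⟨key, ?_, ?_⟩
  · intro a ha b hb hab
    simp only []
    rw [key a ha.1 ha.2, key b hb.1 hb.2]
    rw [div_lt_div_iff₀ hden hden]
    nlinarith [mul_pos (mul_pos (mul_pos (sub_pos.mpr hab) hδl0) hVl) hden]
  · intro q hq0 hq1
    rw [key q hq0 hq1]
    rw [div_lt_div_iff₀ hden hden]
    nlinarith [mul_pos (mul_pos (mul_pos hq0 hδl0) hVl) hden]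
end

section
/- Let ω_t > 0 > ω_g be real numbers and δ ∈ (0,1]. For s ∈ (0,1], let σ*(s) = ω_t / (s·δ·(ω_t − ω_g)) be the unique lockdown probability making the malicious sender's benefit of persisting B(σ) = ω_t − s·δ·σ·(ω_t − ω_g) equal to zero. Then σ* is strictly decreasing in s, and the product s·σ*(s) = ω_t / (δ·(ω_t − ω_g)) is constant in s. -/
/-- Legislating a minimum level of security has only a limited effect: the
indifference lockdown probability `σ*(s) = ω_t / (s·δ·(ω_t − ω_g))` (the zero
of `B(σ) = ω_t − s·δ·σ·(ω_t − ω_g)`) is strictly decreasing in the secure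
fraction `s`, while the aggregate lockdown pressure `s·σ*(s)` is the constant
`ω_t / (δ·(ω_t − ω_g))`, independent of `s`. -/
theorem legislation_limited_effect
    (ωt ωg δ : ℝ)
    (hωt : 0 < ωt) (hωg : ωg < 0)
    (hδ0 : 0 < δ) (hδ1 : δ ≤ 1)
    (σstar : ℝ → ℝ)
    (hσstar : ∀ s, σstar s = ωt / (s * δ * (ωt - ωg))) :
    StrictAntiOn σstar (Set.Ioc (0 : ℝ) 1) ∧
    (∀ s, 0 < s → s ≤ 1 → s * σstar s = ωt / (δ * (ωt - ωg))) := by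
  have hd : 0 < ωt - ωg := by linarith
  constructor
  · intro a ha b hb hab
    rw [hσstar a, hσstar b]
    have ha0 := ha.1
    apply div_lt_div_of_pos_left hωt
    · positivity
    · apply mul_lt_mul_of_pos_right _ hd
      exact mul_lt_mul_of_pos_right hab hδ0
  · intro s hs _
    rw [hσstar s]
    field_simp
end
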